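/- Let μ > 0, v₀ > 0 and 0 < k < Λ < ∞. Define the cutoff self-energy at z ∈ ℂ by Σ_k^Λ(z) = (1/(4π²)) ∫_k^Λ ∫_{−k}^{k} h(k,p,l)² · p · l / (8k · (z − e(p) − e(l))) ds dt, where p = (t+s)/2 and l = (t−s)/2. Then: (i) Σ_k^Λ(0) is finite (the integrand extends to a bounded measurable function on the compact integration region, since e(p) + e(l) ≥ √μ·t there); (ii) for every z ∈ ℂ with Im z > 0, the function (t,s) ↦ z · h(k,p,l)² · p · l / (8k · (z − e(p) − e(l)) · (e(p) + e(l))) is Lebesgue integrable on (k,∞) × (−k,k), and lim_{Λ→∞} ( Σ_k^Λ(z) − Σ_k^Λ(0) ) exists and equals (1/(4π²)) times the integral of this function over (k,∞) × (−k,k). -/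

import Mathlib

open Real Filter Asymptotics Topology MeasureTheory

/-- Bogoliubov dispersion relation (contact interaction). -/
noncomputable def disp (μ k : ℝ) : ℝ := Real.sqrt (k^4/4 + μ*k^2)

/-- Bogoliubov coefficient σ. -/
noncomputable def sig (μ k : ℝ) : ℝ :=
  Real.sqrt ((Real.sqrt ((disp μ k)^2 + μ^2) + disp μ k) / (2 * disp μ k))

/-- Bogoliubov coefficient γ. -/
noncomputable def gam (μ k : ℝ) : ℝ :=
  Real.sqrt ((Real.sqrt ((disp μ k)^2 + μ^2) - disp μ k) / (2 * disp μ k))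

/-- Cubic coupling function h(k,p,l). -/
noncomputable def hcub (μ v₀ k p l : ℝ) : ℝ :=
  2 * Real.sqrt (μ * v₀) *
    (sig μ p * gam μ k * gam μ l + sig μ l * gam μ k * gam μ p
      + sig μ p * sig μ l * sig μ k - gam μ p * sig μ k * sig μ l
      - gam μ l * sig μ k * sig μ p - gam μ p * gam μ l * gam μ k)

noncomputable def A1 (μ x y : ℝ) : ℝ := Real.sqrt ((x + y)^2 + 4*μ^2)
noncomputable def A2 (μ x y : ℝ) : ℝ := Real.sqrt ((x - y)^2 + 4*μ^2)

/-- The cutoff self-energy Σ_k^Λ(z) in the variables t = p+l, s = p−l. -/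
noncomputable def SigmaCut (μ v₀ k Λ : ℝ) (z : ℂ) : ℂ :=
  (1/(4*(Real.pi : ℂ)^2)) * ∫ t in k..Λ, ∫ s in (-k)..k,
    ((hcub μ v₀ k ((t+s)/2) ((t-s)/2) : ℝ) : ℂ)^2
        * (((t+s)/2 : ℝ) : ℂ) * (((t-s)/2 : ℝ) : ℂ)
      / (((8*k : ℝ) : ℂ) * (z - ((disp μ ((t+s)/2) : ℝ) : ℂ)
            - ((disp μ ((t-s)/2) : ℝ) : ℂ)))

/-- The integrand of the renormalized self-energy (after subtracting Σ_k^Λ(0)). -/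
noncomputable def renInt (μ v₀ k : ℝ) (z : ℂ) (ts : ℝ × ℝ) : ℂ :=
  z * ((hcub μ v₀ k ((ts.1+ts.2)/2) ((ts.1-ts.2)/2) : ℝ) : ℂ)^2
      * (((ts.1+ts.2)/2 : ℝ) : ℂ) * (((ts.1-ts.2)/2 : ℝ) : ℂ)
    / (((8*k : ℝ) : ℂ)
        * (z - ((disp μ ((ts.1+ts.2)/2) : ℝ) : ℂ) - ((disp μ ((ts.1-ts.2)/2) : ℝ) : ℂ))
        * (((disp μ ((ts.1+ts.2)/2) + disp μ ((ts.1-ts.2)/2) : ℝ) : ℂ)))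

/-!
On the strip `k < t`, `|s| < k` both momenta `p, l` lie in `(0, t)`. There `γ ≤ σ` and
`σ(x)² ≤ 1 + √μ / x` give `h(k,p,l)² p l = O(t²)`, while `e(p) + e(l) ≥ max (√μ t) (t² / 4)`;
hence the `z = 0` integrand is bounded on the whole strip. For `Im z > 0` and real `E ≥ 0` one has
`‖z - E‖ ≥ Im z · E / (Im z + ‖z‖)`, and the renormalized integrand is `-z / (z - E)` times the
`z = 0` integrand, so it is `O(t⁻²)` and integrable. On a truncated strip it is the difference of
the integrands of `Σ_k^Λ(z)` and `Σ_k^Λ(0)`, and `Λ → ∞` is dominated convergence along the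
exhaustion of the strip by `(k, Λ) × (-k, k)`.
-/

lemma disp_nonneg (μ x : ℝ) : 0 ≤ disp μ x := Real.sqrt_nonneg _

lemma disp_pos {μ x : ℝ} (hμ : 0 < μ) (hx : 0 < x) : 0 < disp μ x :=
  Real.sqrt_pos.mpr (by positivity)

lemma sqrt_mul_le_disp {μ x : ℝ} (hμ : 0 ≤ μ) (hx : 0 ≤ x) : √μ * x ≤ disp μ x := by
  rw [disp, Real.le_sqrt (by positivity) (by positivity), mul_pow, Real.sq_sqrt hμ]
  exact le_add_of_nonneg_left (by positivity)

lemma sq_div_two_le_disp {μ : ℝ} (hμ : 0 ≤ μ) (x : ℝ) : x ^ 2 / 2 ≤ disp μ x := by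
  rw [disp, Real.le_sqrt (by positivity) (by positivity)]
  nlinarith [mul_nonneg hμ (sq_nonneg x)]

lemma sqrt_mul_le_disp_add_disp {μ t s : ℝ} (hμ : 0 ≤ μ) (hs₁ : -t ≤ s) (hs₂ : s ≤ t) :
    √μ * t ≤ disp μ ((t + s) / 2) + disp μ ((t - s) / 2) := by
  have hp := sqrt_mul_le_disp hμ (x := (t + s) / 2) (by linarith)
  have hl := sqrt_mul_le_disp hμ (x := (t - s) / 2) (by linarith)
  linarith

lemma sq_div_four_le_disp_add_disp {μ : ℝ} (hμ : 0 ≤ μ) (t s : ℝ) :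
    t ^ 2 / 4 ≤ disp μ ((t + s) / 2) + disp μ ((t - s) / 2) := by
  nlinarith [sq_div_two_le_disp hμ ((t + s) / 2), sq_div_two_le_disp hμ ((t - s) / 2),
    sq_nonneg s]

lemma gam_nonneg (μ x : ℝ) : 0 ≤ gam μ x := Real.sqrt_nonneg _

lemma gam_le_sig (μ x : ℝ) : gam μ x ≤ sig μ x := by
  have := disp_nonneg μ x
  exact Real.sqrt_le_sqrt (div_le_div_of_nonneg_right (by linarith) (by positivity))

lemma sig_sq_le {μ x : ℝ} (hμ : 0 < μ) (hx : 0 < x) : sig μ x ^ 2 ≤ 1 + √μ / x := by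
  have he := disp_pos hμ hx
  set e := disp μ x
  have hroot : √(e ^ 2 + μ ^ 2) ≤ e + μ := Real.sqrt_le_iff.mpr ⟨by positivity, by nlinarith⟩
  have hμe : μ * x ≤ √μ * e := by
    nlinarith [mul_le_mul_of_nonneg_left (sqrt_mul_le_disp hμ.le hx.le) (Real.sqrt_nonneg μ),
      Real.mul_self_sqrt hμ.le]
  have hμe' : μ ≤ √μ / x * e := by rw [div_mul_eq_mul_div, le_div_iff₀ hx]; linarith
  rw [sig, Real.sq_sqrt (by positivity), div_le_iff₀ (by positivity)]
  linarith

lemma abs_cubic_combination_le {sp sk sl gp gk gl : ℝ} (hgp : 0 ≤ gp) (hgk : 0 ≤ gk)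
    (hgl : 0 ≤ gl) (hp : gp ≤ sp) (hk : gk ≤ sk) (hl : gl ≤ sl) :
    |sp * gk * gl + sl * gk * gp + sp * sl * sk - gp * sk * sl - gl * sk * sp - gp * gl * gk|
      ≤ 3 * (sp * sk * sl) := by
  have hsp : 0 ≤ sp := hgp.trans hp
  have hsk : 0 ≤ sk := hgk.trans hk
  have hsl : 0 ≤ sl := hgl.trans hl
  have h₁ : sp * gk * gl ≤ sp * sk * sl := by gcongr
  have h₂ : gp * gk * sl ≤ sp * sk * sl := by gcongr
  have h₃ : gp * sk * sl ≤ sp * sk * sl := by gcongr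
  have h₄ : sp * sk * gl ≤ sp * sk * sl := by gcongr
  have h₅ : gp * gk * gl ≤ sp * sk * sl := by gcongr
  rw [abs_le]
  constructor <;> linarith [mul_nonneg (mul_nonneg hsp hgk) hgl,
    mul_nonneg (mul_nonneg hgp hgk) hsl, mul_nonneg (mul_nonneg hsp hsk) hsl,
    mul_nonneg (mul_nonneg hgp hsk) hsl,
    mul_nonneg (mul_nonneg hsp hsk) hgl, mul_nonneg (mul_nonneg hgp hgk) hgl]

lemma hcub_sq_le {μ v₀ : ℝ} (hμ : 0 ≤ μ) (hv : 0 ≤ v₀) (k p l : ℝ) :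
    hcub μ v₀ k p l ^ 2 ≤ 36 * μ * v₀ * (sig μ p ^ 2 * sig μ k ^ 2 * sig μ l ^ 2) := by
  have hE := abs_cubic_combination_le (gam_nonneg μ p) (gam_nonneg μ k) (gam_nonneg μ l)
    (gam_le_sig μ p) (gam_le_sig μ k) (gam_le_sig μ l)
  calc hcub μ v₀ k p l ^ 2
      = 4 * (μ * v₀) * |sig μ p * gam μ k * gam μ l + sig μ l * gam μ k * gam μ p
          + sig μ p * sig μ l * sig μ k - gam μ p * sig μ k * sig μ l
          - gam μ l * sig μ k * sig μ p - gam μ p * gam μ l * gam μ k| ^ 2 := by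
        rw [hcub, mul_pow, mul_pow, Real.sq_sqrt (by positivity), sq_abs]; norm_num
    _ ≤ 4 * (μ * v₀) * (3 * (sig μ p * sig μ k * sig μ l)) ^ 2 := by gcongr
    _ = 36 * μ * v₀ * (sig μ p ^ 2 * sig μ k ^ 2 * sig μ l ^ 2) := by ring

lemma hcub_sq_mul_mul_le {μ v₀ k p l : ℝ} (hμ : 0 < μ) (hv : 0 ≤ v₀) (hk : 0 < k)
    (hp : 0 < p) (hl : 0 < l) :
    hcub μ v₀ k p l ^ 2 * p * l ≤ 36 * μ * v₀ * (1 + √μ / k) * ((p + √μ) * (l + √μ)) := by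
  have sig_sq_mul_le : ∀ {x : ℝ}, 0 < x → sig μ x ^ 2 * x ≤ x + √μ := fun {x} hx => by
    have := mul_le_mul_of_nonneg_right (sig_sq_le hμ hx) hx.le
    rwa [add_mul, one_mul, div_mul_cancel₀ _ hx.ne'] at this
  calc hcub μ v₀ k p l ^ 2 * p * l
      ≤ 36 * μ * v₀ * (sig μ p ^ 2 * sig μ k ^ 2 * sig μ l ^ 2) * p * l := by
        gcongr; exact hcub_sq_le hμ.le hv k p l
    _ = 36 * μ * v₀ * sig μ k ^ 2 * ((sig μ p ^ 2 * p) * (sig μ l ^ 2 * l)) := by ring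
    _ ≤ 36 * μ * v₀ * (1 + √μ / k) * ((p + √μ) * (l + √μ)) := by
        gcongr
        · exact sig_sq_le hμ hk
        · exact sig_sq_mul_le hp
        · exact sig_sq_mul_le hl

lemma hcub_sq_mul_mul_le_of_mem_strip {μ v₀ k t s : ℝ} (hμ : 0 < μ) (hv : 0 ≤ v₀) (hk : 0 < k)
    (ht : k < t) (hs₁ : -k < s) (hs₂ : s < k) :
    hcub μ v₀ k ((t + s) / 2) ((t - s) / 2) ^ 2 * ((t + s) / 2) * ((t - s) / 2)
      ≤ 36 * μ * v₀ * (1 + √μ / k) ^ 3 * t ^ 2 := by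
  have hsqrt : √μ ≤ √μ / k * t := by
    rw [div_mul_eq_mul_div, le_div_iff₀ hk]
    exact mul_le_mul_of_nonneg_left ht.le (Real.sqrt_nonneg μ)
  have hp : (t + s) / 2 + √μ ≤ (1 + √μ / k) * t := by linarith
  have hl : (t - s) / 2 + √μ ≤ (1 + √μ / k) * t := by linarith
  calc hcub μ v₀ k ((t + s) / 2) ((t - s) / 2) ^ 2 * ((t + s) / 2) * ((t - s) / 2)
      ≤ 36 * μ * v₀ * (1 + √μ / k) * (((t + s) / 2 + √μ) * ((t - s) / 2 + √μ)) :=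
        hcub_sq_mul_mul_le hμ hv hk (by linarith) (by linarith)
    _ ≤ 36 * μ * v₀ * (1 + √μ / k) * (((1 + √μ / k) * t) * ((1 + √μ / k) * t)) := by
        gcongr <;> linarith [Real.sqrt_nonneg μ]
    _ = 36 * μ * v₀ * (1 + √μ / k) ^ 3 * t ^ 2 := by ring

noncomputable def cutoffIntegrandAtZero (μ v₀ k : ℝ) (ts : ℝ × ℝ) : ℝ :=
  (hcub μ v₀ k ((ts.1+ts.2)/2) ((ts.1-ts.2)/2))^2 * ((ts.1+ts.2)/2) * ((ts.1-ts.2)/2)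
    / (8*k*(0 - disp μ ((ts.1+ts.2)/2) - disp μ ((ts.1-ts.2)/2)))

noncomputable def cutoffIntegrand (μ v₀ k : ℝ) (w : ℂ) (ts : ℝ × ℝ) : ℂ :=
  ((hcub μ v₀ k ((ts.1+ts.2)/2) ((ts.1-ts.2)/2) : ℝ) : ℂ)^2
      * (((ts.1+ts.2)/2 : ℝ) : ℂ) * (((ts.1-ts.2)/2 : ℝ) : ℂ)
    / (((8*k : ℝ) : ℂ) * (w - ((disp μ ((ts.1+ts.2)/2) : ℝ) : ℂ)
          - ((disp μ ((ts.1-ts.2)/2) : ℝ) : ℂ)))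

lemma abs_cutoffIntegrandAtZero_le {μ v₀ k : ℝ} (hμ : 0 < μ) (hv : 0 ≤ v₀) (hk : 0 < k)
    {ts : ℝ × ℝ} (hts : ts ∈ Set.Ioi k ×ˢ Set.Ioo (-k) k) :
    |cutoffIntegrandAtZero μ v₀ k ts| ≤ 18 * μ * v₀ * (1 + √μ / k) ^ 3 / k := by
  obtain ⟨t, s⟩ := ts
  obtain ⟨ht, hs₁, hs₂⟩ : k < t ∧ -k < s ∧ s < k := hts
  have hW : 0 ≤ hcub μ v₀ k ((t + s) / 2) ((t - s) / 2) ^ 2 * ((t + s) / 2) * ((t - s) / 2) :=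
    mul_nonneg (mul_nonneg (sq_nonneg _) (by linarith)) (by linarith)
  have hE := sq_div_four_le_disp_add_disp hμ.le t s
  have ht₀ : 0 < t := hk.trans ht
  calc |cutoffIntegrandAtZero μ v₀ k (t, s)|
      = hcub μ v₀ k ((t + s) / 2) ((t - s) / 2) ^ 2 * ((t + s) / 2) * ((t - s) / 2)
          / (8 * k * (disp μ ((t + s) / 2) + disp μ ((t - s) / 2))) := by
        rw [cutoffIntegrandAtZero, abs_div, abs_of_nonneg hW, abs_of_nonpos (by nlinarith)]
        ring
    _ ≤ 36 * μ * v₀ * (1 + √μ / k) ^ 3 * t ^ 2 / (8 * k * (t ^ 2 / 4)) :=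
        div_le_div₀ (by positivity) (hcub_sq_mul_mul_le_of_mem_strip hμ hv hk ht hs₁ hs₂)
          (by positivity) (by gcongr)
    _ = 18 * μ * v₀ * (1 + √μ / k) ^ 3 / k := by field_simp; ring

lemma cutoffIntegrand_zero (μ v₀ k : ℝ) (ts : ℝ × ℝ) :
    cutoffIntegrand μ v₀ k 0 ts = cutoffIntegrandAtZero μ v₀ k ts := by
  simp only [cutoffIntegrand, cutoffIntegrandAtZero]
  push_cast
  rfl

lemma renInt_eq_mul_cutoffIntegrand_zero (μ v₀ k : ℝ) (z : ℂ) (ts : ℝ × ℝ) :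
    renInt μ v₀ k z ts = -(z / (z - ((disp μ ((ts.1+ts.2)/2) + disp μ ((ts.1-ts.2)/2) : ℝ) : ℂ)))
      * cutoffIntegrand μ v₀ k 0 ts := by
  simp only [renInt, cutoffIntegrand, Complex.ofReal_add, ← sub_sub,
    show ∀ a b : ℂ, 0 - a - b = -(a + b) by intros; ring, div_eq_mul_inv, mul_inv, inv_neg]
  ring

lemma cutoffIntegrand_sub_cutoffIntegrand_zero {μ v₀ k : ℝ} (hk : 0 < k) {z : ℂ} (hz : z.im ≠ 0)
    {ts : ℝ × ℝ} (hE : 0 < disp μ ((ts.1+ts.2)/2) + disp μ ((ts.1-ts.2)/2)) :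
    cutoffIntegrand μ v₀ k z ts - cutoffIntegrand μ v₀ k 0 ts = renInt μ v₀ k z ts := by
  have hzE : z - ((disp μ ((ts.1+ts.2)/2) : ℝ) : ℂ) - ((disp μ ((ts.1-ts.2)/2) : ℝ) : ℂ) ≠ 0 :=
    fun h => hz (by simpa using congrArg Complex.im h)
  have hE' : ((disp μ ((ts.1+ts.2)/2) : ℝ) : ℂ) + ((disp μ ((ts.1-ts.2)/2) : ℝ) : ℂ) ≠ 0 := by
    exact_mod_cast hE.ne'
  have h0E : (0 : ℂ) - ((disp μ ((ts.1+ts.2)/2) : ℝ) : ℂ) - ((disp μ ((ts.1-ts.2)/2) : ℝ) : ℂ)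
      ≠ 0 := by
    rw [zero_sub, sub_eq_add_neg, ← neg_add]; exact neg_ne_zero.mpr hE'
  have hk' : ((8 * k : ℝ) : ℂ) ≠ 0 := by exact_mod_cast (by positivity : 8 * k ≠ 0)
  simp only [renInt, cutoffIntegrand, Complex.ofReal_add]
  rw [div_sub_div _ _ (mul_ne_zero hk' hzE) (mul_ne_zero hk' h0E),
    div_eq_div_iff (mul_ne_zero (mul_ne_zero hk' hzE) (mul_ne_zero hk' h0E))
      (mul_ne_zero (mul_ne_zero hk' hzE) hE')]
  ring

lemma im_mul_le_norm_sub_ofReal {z : ℂ} (hz : 0 ≤ z.im) (x : ℝ) :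
    z.im * x ≤ (z.im + ‖z‖) * ‖z - x‖ := by
  have him : z.im ≤ ‖z - x‖ := by
    simpa using (le_abs_self _).trans (Complex.abs_im_le_norm (z - x))
  have hre : x - ‖z‖ ≤ ‖z - x‖ := by
    have := norm_sub_norm_le (x : ℂ) z
    rw [Complex.norm_real, Real.norm_eq_abs, norm_sub_rev] at this
    linarith [le_abs_self x]
  nlinarith [mul_le_mul_of_nonneg_left hre hz, mul_le_mul_of_nonneg_left him (norm_nonneg z)]

lemma exists_norm_renInt_le {μ v₀ k : ℝ} (hμ : 0 < μ) (hv : 0 ≤ v₀) (hk : 0 < k) {z : ℂ}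
    (hz : 0 < z.im) :
    ∃ C, ∀ ts ∈ Set.Ioi k ×ˢ Set.Ioo (-k) k, ‖renInt μ v₀ k z ts‖ ≤ C / ts.1 ^ 2 := by
  set B := 18 * μ * v₀ * (1 + √μ / k) ^ 3 / k
  refine ⟨4 * (z.im + ‖z‖) * ‖z‖ * B / z.im, fun ts hts => ?_⟩
  set E := disp μ ((ts.1+ts.2)/2) + disp μ ((ts.1-ts.2)/2)
  have ht : 0 < ts.1 := hk.trans hts.1
  have hN : z.im * (ts.1 ^ 2 / 4) ≤ (z.im + ‖z‖) * ‖z - E‖ :=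
    (mul_le_mul_of_nonneg_left (sq_div_four_le_disp_add_disp hμ.le _ _) hz.le).trans
      (im_mul_le_norm_sub_ofReal hz.le E)
  have hN' : z.im * ts.1 ^ 2 / (4 * (z.im + ‖z‖)) ≤ ‖z - E‖ := by
    rw [div_le_iff₀ (by positivity)]; linarith
  rw [renInt_eq_mul_cutoffIntegrand_zero, norm_mul, norm_neg, norm_div, cutoffIntegrand_zero,
    Complex.norm_real, Real.norm_eq_abs]
  calc ‖z‖ / ‖z - E‖ * |cutoffIntegrandAtZero μ v₀ k ts|
      ≤ ‖z‖ / ‖z - E‖ * B := by gcongr; exact abs_cutoffIntegrandAtZero_le hμ hv hk hts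
    _ ≤ ‖z‖ / (z.im * ts.1 ^ 2 / (4 * (z.im + ‖z‖))) * B := by gcongr
    _ = 4 * (z.im + ‖z‖) * ‖z‖ * B / z.im / ts.1 ^ 2 := by field_simp

@[fun_prop]
lemma measurable_disp (μ : ℝ) : Measurable (disp μ) := by
  unfold disp; fun_prop

@[fun_prop]
lemma measurable_sig (μ : ℝ) : Measurable (sig μ) := by
  unfold sig; fun_prop

@[fun_prop]
lemma measurable_gam (μ : ℝ) : Measurable (gam μ) := by
  unfold gam; fun_prop

@[fun_prop]
lemma measurable_hcub (μ v₀ : ℝ) :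
    Measurable (fun x : ℝ × ℝ × ℝ => hcub μ v₀ x.1 x.2.1 x.2.2) := by
  unfold hcub; fun_prop

lemma measurable_cutoffIntegrandAtZero (μ v₀ k : ℝ) :
    Measurable (cutoffIntegrandAtZero μ v₀ k) := by
  unfold cutoffIntegrandAtZero; fun_prop

lemma measurable_renInt (μ v₀ k : ℝ) (z : ℂ) : Measurable (renInt μ v₀ k z) := by
  unfold renInt; fun_prop

lemma integrableOn_cutoffIntegrandAtZero {μ v₀ k : ℝ} (hμ : 0 < μ) (hv : 0 ≤ v₀) (hk : 0 < k)
    (L : ℝ) : IntegrableOn (cutoffIntegrandAtZero μ v₀ k) (Set.Ioo k L ×ˢ Set.Ioo (-k) k) := by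
  refine Measure.integrableOn_of_bounded (M := 18 * μ * v₀ * (1 + √μ / k) ^ 3 / k) ?_
    (measurable_cutoffIntegrandAtZero μ v₀ k).aestronglyMeasurable ?_
  · rw [Measure.volume_eq_prod, Measure.prod_prod]
    exact ENNReal.mul_ne_top measure_Ioo_lt_top.ne measure_Ioo_lt_top.ne
  · filter_upwards [ae_restrict_mem (measurableSet_Ioo.prod measurableSet_Ioo)] with ts hts
    exact abs_cutoffIntegrandAtZero_le hμ hv hk ⟨hts.1.1, hts.2⟩

lemma integrableOn_div_sq_fst {k : ℝ} (hk : 0 < k) (C a b : ℝ) :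
    IntegrableOn (fun ts : ℝ × ℝ => C / ts.1 ^ 2) (Set.Ioi k ×ˢ Set.Ioo a b) := by
  have h : IntegrableOn (fun t : ℝ => C / t ^ 2) (Set.Ioi k) := by
    refine IntegrableOn.congr_fun
      ((integrableOn_Ioi_rpow_of_lt (by norm_num : (-2 : ℝ) < -1) hk).const_mul C)
      (fun t ht => ?_) measurableSet_Ioi
    rw [Real.rpow_neg (hk.trans ht).le, Real.rpow_two, div_eq_mul_inv]
  rw [IntegrableOn, Measure.volume_eq_prod, ← Measure.prod_restrict]
  exact h.comp_fst _

lemma integrableOn_renInt {μ v₀ k : ℝ} (hμ : 0 < μ) (hv : 0 ≤ v₀) (hk : 0 < k) {z : ℂ}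
    (hz : 0 < z.im) : IntegrableOn (renInt μ v₀ k z) (Set.Ioi k ×ˢ Set.Ioo (-k) k) := by
  obtain ⟨C, hC⟩ := exists_norm_renInt_le hμ hv hk hz
  refine (integrableOn_div_sq_fst hk C (-k) k).mono'
    (measurable_renInt μ v₀ k z).aestronglyMeasurable ?_
  filter_upwards [ae_restrict_mem (measurableSet_Ioi.prod measurableSet_Ioo)] with ts hts
  exact hC ts hts

lemma SigmaCut_eq_setIntegral {μ v₀ k L : ℝ} (hk : 0 ≤ k) (hL : k ≤ L) {w : ℂ}
    (hw : IntegrableOn (cutoffIntegrand μ v₀ k w) (Set.Ioo k L ×ˢ Set.Ioo (-k) k)) :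
    SigmaCut μ v₀ k L w = 1 / (4 * (π : ℂ) ^ 2)
      * ∫ ts in Set.Ioo k L ×ˢ Set.Ioo (-k) k, cutoffIntegrand μ v₀ k w ts := by
  rw [Measure.volume_eq_prod] at hw ⊢
  rw [SigmaCut, setIntegral_prod _ hw, intervalIntegral.integral_of_le hL,
    integral_Ioc_eq_integral_Ioo]
  simp only [intervalIntegral.integral_of_le (neg_le_self hk), integral_Ioc_eq_integral_Ioo]
  rfl

lemma SigmaCut_sub_SigmaCut_zero {μ v₀ k L : ℝ} (hμ : 0 < μ) (hv : 0 ≤ v₀) (hk : 0 < k)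
    (hL : k < L) {z : ℂ} (hz : 0 < z.im) :
    SigmaCut μ v₀ k L z - SigmaCut μ v₀ k L 0 = 1 / (4 * (π : ℂ) ^ 2)
      * ∫ ts in Set.Ioo k L ×ˢ Set.Ioo (-k) k, renInt μ v₀ k z ts := by
  have hsub : Set.Ioo k L ×ˢ Set.Ioo (-k) k ⊆ Set.Ioi k ×ˢ Set.Ioo (-k) k :=
    Set.prod_mono Set.Ioo_subset_Ioi_self subset_rfl
  have hdiff : Set.EqOn (fun ts => cutoffIntegrand μ v₀ k z ts - cutoffIntegrand μ v₀ k 0 ts)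
      (renInt μ v₀ k z) (Set.Ioo k L ×ˢ Set.Ioo (-k) k) := by
    rintro ⟨t, s⟩ ⟨⟨ht, -⟩, hs₁, hs₂⟩
    refine cutoffIntegrand_sub_cutoffIntegrand_zero hk hz.ne' ?_
    exact (mul_pos (Real.sqrt_pos.mpr hμ) (hk.trans ht)).trans_le
      (sqrt_mul_le_disp_add_disp hμ.le (by linarith) (by linarith))
  have h₀ : IntegrableOn (cutoffIntegrand μ v₀ k 0) (Set.Ioo k L ×ˢ Set.Ioo (-k) k) :=
    IntegrableOn.congr_fun (integrableOn_cutoffIntegrandAtZero hμ hv hk L).ofReal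
      (fun ts _ => (cutoffIntegrand_zero μ v₀ k ts).symm) (measurableSet_Ioo.prod measurableSet_Ioo)
  have hren := (integrableOn_renInt hμ hv hk hz).mono_set hsub
  have hz' : IntegrableOn (cutoffIntegrand μ v₀ k z) (Set.Ioo k L ×ˢ Set.Ioo (-k) k) :=
    (h₀.add hren).congr_fun (fun ts hts => by rw [Pi.add_apply, ← hdiff hts, add_sub_cancel])
      (measurableSet_Ioo.prod measurableSet_Ioo)
  rw [SigmaCut_eq_setIntegral hk.le hL.le hz', SigmaCut_eq_setIntegral hk.le hL.le h₀, ← mul_sub,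
    ← integral_sub hz' h₀, setIntegral_congr_fun (measurableSet_Ioo.prod measurableSet_Ioo) hdiff]

lemma tendsto_setIntegral_Ioo_prod {E : Type*} [NormedAddCommGroup E] [NormedSpace ℝ E]
    {f : ℝ × ℝ → E} {a : ℝ} {s : Set ℝ} (hs : MeasurableSet s)
    (hf : IntegrableOn f (Set.Ioi a ×ˢ s)) :
    Tendsto (fun L => ∫ x in Set.Ioo a L ×ˢ s, f x) atTop (𝓝 (∫ x in Set.Ioi a ×ˢ s, f x)) := by
  have hcover : AECover (volume.restrict (Set.Ioi a ×ˢ s)) atTop (fun L => Set.Ioo a L ×ˢ s) :=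
    { ae_eventually_mem := by
        filter_upwards [ae_restrict_mem (measurableSet_Ioi.prod hs)] with x hx
        filter_upwards [eventually_gt_atTop x.1] with L hL
        exact ⟨⟨hx.1, hL⟩, hx.2⟩
      measurableSet := fun L => measurableSet_Ioo.prod hs }
  convert hcover.integral_tendsto_of_countably_generated hf using 2 with L
  rw [Measure.restrict_restrict_of_subset (Set.prod_mono Set.Ioo_subset_Ioi_self subset_rfl)]

theorem stmt16_general (μ v₀ k Λ : ℝ) (hμ : 0 < μ) (hv : 0 < v₀) (hk : 0 < k) :
    -- (i) the z = 0 integrand is integrable on the compact cutoff region,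
    MeasureTheory.IntegrableOn
      (fun ts : ℝ × ℝ =>
        (hcub μ v₀ k ((ts.1+ts.2)/2) ((ts.1-ts.2)/2))^2
            * ((ts.1+ts.2)/2) * ((ts.1-ts.2)/2)
          / (8*k*(0 - disp μ ((ts.1+ts.2)/2) - disp μ ((ts.1-ts.2)/2))))
      (Set.Ioo k Λ ×ˢ Set.Ioo (-k) k) ∧
    -- since e(p) + e(l) ≥ √μ · t on the region,
    (∀ t s : ℝ, k < t → t < Λ → -k < s → s < k →
        Real.sqrt μ * t ≤ disp μ ((t+s)/2) + disp μ ((t-s)/2)) ∧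
    -- (ii) for Im z > 0 the renormalized integrand is integrable on the
    -- unbounded region and Σ_k^Λ(z) − Σ_k^Λ(0) converges as Λ → ∞.
    (∀ z : ℂ, 0 < z.im →
      MeasureTheory.IntegrableOn (renInt μ v₀ k z) (Set.Ioi k ×ˢ Set.Ioo (-k) k) ∧
      Filter.Tendsto (fun L => SigmaCut μ v₀ k L z - SigmaCut μ v₀ k L 0)
        Filter.atTop
        (𝓝 ((1/(4*(Real.pi : ℂ)^2))
              * ∫ ts in Set.Ioi k ×ˢ Set.Ioo (-k) k, renInt μ v₀ k z ts))) := by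
  refine ⟨integrableOn_cutoffIntegrandAtZero hμ hv.le hk Λ,
    fun t s ht _ hs₁ hs₂ => sqrt_mul_le_disp_add_disp hμ.le (by linarith) (by linarith),
    fun z hz => ⟨integrableOn_renInt hμ hv.le hk hz, ?_⟩⟩
  refine ((tendsto_setIntegral_Ioo_prod measurableSet_Ioo
    (integrableOn_renInt hμ hv.le hk hz)).const_mul _).congr' ?_
  filter_upwards [eventually_gt_atTop k] with L hL
  exact (SigmaCut_sub_SigmaCut_zero hμ hv.le hk hL hz).symm

theorem stmt16 (μ v₀ k Λ : ℝ) (hμ : 0 < μ) (hv : 0 < v₀) (hk : 0 < k) (hΛ : k < Λ) :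
    -- (i) the z = 0 integrand is integrable on the compact cutoff region,
    MeasureTheory.IntegrableOn
      (fun ts : ℝ × ℝ =>
        (hcub μ v₀ k ((ts.1+ts.2)/2) ((ts.1-ts.2)/2))^2
            * ((ts.1+ts.2)/2) * ((ts.1-ts.2)/2)
          / (8*k*(0 - disp μ ((ts.1+ts.2)/2) - disp μ ((ts.1-ts.2)/2))))
      (Set.Ioo k Λ ×ˢ Set.Ioo (-k) k) ∧
    -- since e(p) + e(l) ≥ √μ · t on the region,
    (∀ t s : ℝ, k < t → t < Λ → -k < s → s < k →
        Real.sqrt μ * t ≤ disp μ ((t+s)/2) + disp μ ((t-s)/2)) ∧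
    -- (ii) for Im z > 0 the renormalized integrand is integrable on the
    -- unbounded region and Σ_k^Λ(z) − Σ_k^Λ(0) converges as Λ → ∞.
    (∀ z : ℂ, 0 < z.im →
      MeasureTheory.IntegrableOn (renInt μ v₀ k z) (Set.Ioi k ×ˢ Set.Ioo (-k) k) ∧
      Filter.Tendsto (fun L => SigmaCut μ v₀ k L z - SigmaCut μ v₀ k L 0)
        Filter.atTop
        (𝓝 ((1/(4*(Real.pi : ℂ)^2))
              * ∫ ts in Set.Ioi k ×ˢ Set.Ioo (-k) k, renInt μ v₀ k z ts))) :=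
  stmt16_general μ v₀ k Λ hμ hv hk
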